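/- Let a, b ≥ 0 with a + b = 1 and C₁, C₂ ≥ 0. Then min(9·C₂, 9·C₁ + (27/4)·b·C₂) ≤ (81 / ((27/4)·b² − (27/4)·b + 9)) · (a·C₁ + b·C₂). -/

import Mathlib

theorem min_mul_add_le_mul_add_mul {α : Type*} [CommSemiring α] [LinearOrder α]
    [IsOrderedRing α] {x y p q : α} (hp : 0 ≤ p) (hq : 0 ≤ q) :
    min x y * (p + q) ≤ p * x + q * y :=
  calc min x y * (p + q) = p * min x y + q * min x y := by ring
    _ ≤ p * x + q * y := by gcongr <;> simp

theorem mssr_bipoint_averaging_general (a b C₁ C₂ : ℝ) (ha : 0 ≤ a) (hb : 0 ≤ b)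
    (hab : a + b = 1) :
    min (9 * C₂) (9 * C₁ + (27/4) * b * C₂) ≤
      (81 / ((27/4) * b^2 - (27/4) * b + 9)) * (a * C₁ + b * C₂) := by
  obtain rfl : a = 1 - b := by linarith
  have hD : 0 < (27/4) * b^2 - (27/4) * b + 9 := by nlinarith [sq_nonneg (b - 1/2)]
  rw [div_mul_eq_mul_div 81, le_div_iff₀ hD]
  -- Weigh the arguments of `min` by `D - 9a` and `9a`, `D` the denominator:
  -- the weighted sum is then exactly `81 (a C₁ + b C₂)`.
  calc min (9 * C₂) (9 * C₁ + (27/4) * b * C₂) * ((27/4) * b^2 - (27/4) * b + 9)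
      = min (9 * C₂) (9 * C₁ + (27/4) * b * C₂) *
          (((27/4) * b^2 + (9/4) * b) + 9 * (1 - b)) := by ring
    _ ≤ ((27/4) * b^2 + (9/4) * b) * (9 * C₂) + 9 * (1 - b) * (9 * C₁ + (27/4) * b * C₂) :=
        min_mul_add_le_mul_add_mul (by positivity) (by linarith)
    _ = 81 * ((1 - b) * C₁ + b * C₂) := by ring

theorem mssr_bipoint_averaging (a b C₁ C₂ : ℝ) (ha : 0 ≤ a) (hb : 0 ≤ b)
    (hab : a + b = 1) (hC₁ : 0 ≤ C₁) (hC₂ : 0 ≤ C₂) :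
    min (9 * C₂) (9 * C₁ + (27/4) * b * C₂) ≤
      (81 / ((27/4) * b^2 - (27/4) * b + 9)) * (a * C₁ + b * C₂) :=
  mssr_bipoint_averaging_general a b C₁ C₂ ha hb hab
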